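/- For a sequence f₁,…,fₙ of elements in a commutative ring P, the Koszul complex K•(f) is self-dual: for each p with 0 ≤ p ≤ n there are isomorphisms Hₚ(K•(f)) ≅ H^{n-p}(Hom_P(K•(f),P)) between Koszul homology and Koszul cohomology. -/

import Mathlib

/-- Degree-`p` term of the Koszul complex on `n` elements: the free module on the
`p`-element subsets of `Fin n` (a model for `⋀ᵖ Pⁿ`). -/
abbrev KMod (P : Type) [CommRing P] (n p : ℕ) : Type :=
  {s : Finset (Fin n) // s.card = p} → P

/-- The Koszul differential `⋀^{p+1} Pⁿ → ⋀ᵖ Pⁿ` induced by `eᵢ ↦ f i`. -/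
noncomputable def koszulD {P : Type} [CommRing P] {n : ℕ} (f : Fin n → P) (p : ℕ) :
    KMod P n (p + 1) →ₗ[P] KMod P n p where
  toFun x t := ∑ i ∈ (t.1ᶜ).attach,
    (-1 : P) ^ (t.1.filter (fun j => j < i.1)).card * f i.1 *
      x ⟨insert i.1 t.1, by
        rw [Finset.card_insert_of_notMem (Finset.mem_compl.mp i.2), t.2]⟩
  map_add' x y := by
    funext t
    simp [mul_add, Finset.sum_add_distrib]
  map_smul' c x := by
    funext t
    simp [Finset.mul_sum, smul_eq_mul]
    refine Finset.sum_congr rfl fun i _ => by ring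

/-- Koszul cycles. -/
noncomputable def koszulZ {P : Type} [CommRing P] {n : ℕ} (f : Fin n → P) :
    (p : ℕ) → Submodule P (KMod P n p)
  | 0 => ⊤
  | p + 1 => LinearMap.ker (koszulD f p)

/-- Koszul homology `H_p(f)`. -/
abbrev KoszulHomology {P : Type} [CommRing P] {n : ℕ} (f : Fin n → P) (p : ℕ) : Type :=
  ↥(koszulZ f p) ⧸
    Submodule.comap (koszulZ f p).subtype (LinearMap.range (koszulD f p))

/-- The dual (transpose) of the Koszul differential, acting on `Hom_P(K•(f), P)`. -/
noncomputable def koszulDT {P : Type} [CommRing P] {n : ℕ} (f : Fin n → P) (p : ℕ) :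
    (KMod P n p →ₗ[P] P) →ₗ[P] (KMod P n (p + 1) →ₗ[P] P) :=
  (koszulD f p).dualMap

/-- Koszul coboundaries in `Hom(⋀ᵖ Pⁿ, P)`. -/
noncomputable def koszulCB {P : Type} [CommRing P] {n : ℕ} (f : Fin n → P) :
    (p : ℕ) → Submodule P (KMod P n p →ₗ[P] P)
  | 0 => ⊥
  | p + 1 => LinearMap.range (koszulDT f p)

/-- Koszul cohomology `H^p(f) = H^p(Hom_P(K•(f), P))`. -/
abbrev KoszulCohomology {P : Type} [CommRing P] {n : ℕ} (f : Fin n → P) (p : ℕ) : Type :=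
  @HasQuotient.Quotient _ _ (@Submodule.hasQuotient P ↥(LinearMap.ker (koszulDT f p)) _ (Submodule.addCommGroup _) (Submodule.module _))
    (Submodule.comap (LinearMap.ker (koszulDT f p)).subtype (koszulCB f p))

/-!
The wedge pairing `⋀ᵖ Pⁿ × ⋀^q Pⁿ → ⋀ⁿ Pⁿ ≅ P`, `p + q = n`, is perfect: in the basis of subsets
it pairs `e_s` with `±e_{sᶜ}`, the sign being that of the shuffle `(s, sᶜ)`. Since the
Koszul differential is a graded derivation of the wedge product and `⋀^{n+1} Pⁿ = 0`, it is
adjoint to itself up to the sign `(-1)ᵖ`. Hence the isomorphism `K_p ≅ Hom(K_{n-p}, P)` induced by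
the pairing carries cycles onto cocycles and boundaries onto coboundaries.
-/

open Finset

section Subquotient

variable {R M M' : Type*} [CommRing R] [AddCommGroup M] [Module R M] [AddCommGroup M']
  [Module R M']

def Submodule.subquotientEquiv (e : M ≃ₗ[R] M') {Z B : Submodule R M} {Z' B' : Submodule R M'}
    (hZ : Z.map (e : M →ₗ[R] M') = Z') (hB : B.map (e : M →ₗ[R] M') = B') :
    (Z ⧸ B.comap Z.subtype) ≃ₗ[R] (Z' ⧸ B'.comap Z'.subtype) := by
  subst hZ hB
  refine Submodule.Quotient.equiv _ _ (e.submoduleMap Z) ?_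
  ext ⟨y, hy⟩
  obtain ⟨x, hx, rfl⟩ := Submodule.mem_map.mp hy
  simp

end Subquotient

section Conjugate

variable {R M M' N N' : Type*} [CommRing R] [AddCommGroup M] [Module R M]
  [AddCommGroup M'] [Module R M'] [AddCommGroup N] [Module R N] [AddCommGroup N'] [Module R N']
  {d : M →ₗ[R] N} {d' : M' →ₗ[R] N'} {e : M ≃ₗ[R] M'} {e₀ : N ≃ₗ[R] N'} {u : Rˣ}

theorem LinearMap.map_ker_eq_of_comp_eq_smul
    (h : (e₀ : N →ₗ[R] N') ∘ₗ d = (u : R) • (d' ∘ₗ (e : M →ₗ[R] M'))) :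
    (LinearMap.ker d).map (e : M →ₗ[R] M') = LinearMap.ker d' := by
  ext y
  have hy := LinearMap.congr_fun h (e.symm y)
  simp only [LinearMap.comp_apply, LinearMap.smul_apply, LinearEquiv.coe_coe,
    LinearEquiv.apply_symm_apply] at hy
  rw [Submodule.mem_map_equiv, LinearMap.mem_ker, LinearMap.mem_ker, ← e₀.map_eq_zero_iff, hy,
    ← Units.smul_def, smul_eq_zero_iff_eq]

theorem LinearMap.map_range_eq_of_comp_eq_smul
    (h : (e₀ : N →ₗ[R] N') ∘ₗ d = (u : R) • (d' ∘ₗ (e : M →ₗ[R] M'))) :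
    (LinearMap.range d).map (e₀ : N →ₗ[R] N') = LinearMap.range d' := by
  ext y
  simp only [Submodule.mem_map, LinearMap.mem_range, LinearEquiv.coe_coe]
  constructor
  · rintro ⟨_, ⟨x, rfl⟩, rfl⟩
    refine ⟨(u : R) • e x, ?_⟩
    simpa using (LinearMap.congr_fun h x).symm
  · rintro ⟨x, rfl⟩
    refine ⟨d (e.symm (u⁻¹ • x)), ⟨_, rfl⟩, ?_⟩
    simpa [← Units.smul_def] using LinearMap.congr_fun h (e.symm (u⁻¹ • x))

end Conjugate

theorem Finset.sum_sum_compl_eq_sum_sum_erase {α M : Type*} [Fintype α] [DecidableEq α]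
    [AddCommMonoid M] (p : ℕ) (F : Finset α → α → M) :
    ∑ s with #s = p, ∑ i ∈ sᶜ, F s i = ∑ u with #u = p + 1, ∑ i ∈ u, F (u.erase i) i := by
  rw [sum_sigma', sum_sigma']
  refine sum_nbij' (fun z => ⟨insert z.2 z.1, z.2⟩) (fun z => ⟨z.1.erase z.2, z.2⟩)
    ?_ ?_ ?_ ?_ ?_ <;> simp only [mem_sigma, mem_filter_univ, mem_compl, and_imp, Sigma.forall]
  · intro s i hs hi
    exact ⟨by rw [card_insert_of_notMem hi, hs], mem_insert_self i s⟩
  · intro u i hu hi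
    exact ⟨by rw [card_erase_of_mem hi, hu, Nat.add_sub_cancel], notMem_erase i u⟩
  · intro s i _ hi
    simp [erase_insert hi]
  · intro u i _ hi
    simp [insert_erase hi]
  · intro s i _ hi
    rw [erase_insert hi]

namespace Koszul

variable {n : ℕ}

/-- `(-1) ^ invNum s` is the sign in `e_s ∧ e_{sᶜ} = ± e_0 ∧ ⋯ ∧ e_{n-1}`. -/
def invNum (s : Finset (Fin n)) : ℕ :=
  ∑ i ∈ s, #{j ∈ sᶜ | j < i}

theorem card_filter_lt_add_card_compl_filter_lt (i : Fin n) (s : Finset (Fin n)) :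
    #{j ∈ s | j < i} + #{j ∈ sᶜ | j < i} = i := by
  rw [← card_union_of_disjoint (disjoint_filter_filter disjoint_compl_right), ← filter_union,
    union_compl, filter_gt_eq_Iio, Fin.card_Iio]

theorem card_filter_lt_add_card_filter_gt {i : Fin n} {s : Finset (Fin n)} (hi : i ∉ s) :
    #{j ∈ s | j < i} + #{j ∈ s | i < j} = #s := by
  rw [← card_filter_add_card_filter_not (s := s) (fun j => j < i)]
  congr 2
  refine filter_congr fun j hj => ?_
  have : j ≠ i := ne_of_mem_of_not_mem hj hi
  omega

theorem card_compl_insert_filter_lt (i : Fin n) (s : Finset (Fin n)) :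
    #{j ∈ (insert i s)ᶜ | j < i} = #{j ∈ sᶜ | j < i} := by
  rw [compl_insert, filter_erase, erase_eq_of_notMem (by simp)]

theorem invNum_insert {i : Fin n} {s : Finset (Fin n)} (hi : i ∉ s) :
    invNum (insert i s) + #s = invNum s + i := by
  have hins : invNum (insert i s) =
      #{j ∈ (insert i s)ᶜ | j < i} + ∑ a ∈ s, #{j ∈ (insert i s)ᶜ | j < a} :=
    sum_insert hi
  have hsum : ∑ a ∈ s, #{j ∈ (insert i s)ᶜ | j < a} + #{a ∈ s | i < a} = invNum s := by
    rw [card_filter, ← sum_add_distrib]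
    refine sum_congr rfl fun a _ => ?_
    rw [compl_insert, filter_erase]
    split_ifs with hia
    · exact card_erase_add_one (mem_filter.mpr ⟨mem_compl.mpr hi, hia⟩)
    · rw [erase_eq_of_notMem (by simp [hia]), add_zero]
  have := card_compl_insert_filter_lt i s
  have := card_filter_lt_add_card_filter_gt hi
  have := card_filter_lt_add_card_compl_filter_lt i s
  omega

theorem neg_one_pow_invNum_insert {P : Type} [CommRing P] {i : Fin n} {s : Finset (Fin n)}
    (hi : i ∉ s) :
    (-1 : P) ^ (#s + invNum (insert i s) + #{j ∈ (insert i s)ᶜ | j < i}) =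
      (-1) ^ (invNum s + #{j ∈ s | j < i}) := by
  have := invNum_insert hi
  have := card_filter_lt_add_card_compl_filter_lt i s
  rw [card_compl_insert_filter_lt, show #s + invNum (insert i s) + #{j ∈ sᶜ | j < i} =
    invNum s + #{j ∈ s | j < i} + 2 * #{j ∈ sᶜ | j < i} by omega, pow_add, pow_mul, neg_one_sq,
    one_pow, mul_one]

variable {P : Type} [CommRing P]

def coeff {p : ℕ} (x : KMod P n p) (s : Finset (Fin n)) : P :=
  if h : #s = p then x ⟨s, h⟩ else 0

theorem coeff_of_card_eq {p : ℕ} (x : KMod P n p) {s : Finset (Fin n)} (h : #s = p) :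
    coeff x s = x ⟨s, h⟩ :=
  dif_pos h

theorem koszulD_apply (f : Fin n → P) {p : ℕ} (x : KMod P n (p + 1))
    (t : {s : Finset (Fin n) // #s = p}) :
    koszulD f p x t =
      ∑ i ∈ t.1ᶜ, (-1) ^ #{j ∈ t.1 | j < i} * f i * coeff x (insert i t.1) := by
  rw [← sum_attach]
  refine sum_congr rfl fun i _ => ?_
  rw [coeff_of_card_eq x (by rw [card_insert_of_notMem (mem_compl.mp i.2), t.2])]

theorem card_compl_eq {p q : ℕ} (h : p + q = n) {s : Finset (Fin n)} (hs : #s = p) :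
    #sᶜ = q := by
  rw [card_compl, hs, Fintype.card_fin]
  omega

def complEquiv {p q : ℕ} (h : p + q = n) :
    {s : Finset (Fin n) // #s = p} ≃ {t : Finset (Fin n) // #t = q} where
  toFun s := ⟨s.1ᶜ, card_compl_eq h s.2⟩
  invFun t := ⟨t.1ᶜ, card_compl_eq (by omega) t.2⟩
  left_inv s := Subtype.ext (compl_compl s.1)
  right_inv t := Subtype.ext (compl_compl t.1)

variable (P) in
/-- The isomorphism `⋀ᵖ Pⁿ ≅ Hom(⋀^q Pⁿ, P)` given by the wedge pairing, `p + q = n`. -/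
noncomputable def pairingEquiv (p q : ℕ) (h : p + q = n) :
    KMod P n p ≃ₗ[P] (KMod P n q →ₗ[P] P) :=
  (LinearEquiv.piCongrRight fun s => LinearEquiv.smulOfUnit ((-1) ^ invNum s.1)).trans <|
    (LinearEquiv.funCongrLeft P P (complEquiv (by omega : q + p = n))).trans <|
      Module.piEquiv _ P P

theorem pairingEquiv_apply {p q : ℕ} (h : p + q = n) (x : KMod P n p) (y : KMod P n q) :
    pairingEquiv P p q h x y = ∑ s with #s = p, (-1) ^ invNum s * coeff x s * coeff y sᶜ := by
  rw [pairingEquiv, LinearEquiv.trans_apply, LinearEquiv.trans_apply, Module.piEquiv_apply_apply,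
    sum_subtype _ (fun _ => mem_filter_univ _), ← (complEquiv h).sum_comp]
  refine sum_congr rfl fun s _ => ?_
  rw [coeff_of_card_eq x s.2, coeff_of_card_eq y (card_compl_eq h s.2)]
  simp [complEquiv, LinearEquiv.smulOfUnit, Units.smul_def, mul_comm]

theorem pairingEquiv_koszulD (f : Fin n → P) {p q : ℕ} (h : p + 1 + q = n)
    (x : KMod P n (p + 1)) (y : KMod P n (q + 1)) :
    pairingEquiv P p (q + 1) (by omega) (koszulD f p x) y =
      (-1) ^ p * pairingEquiv P (p + 1) q h x (koszulD f q y) := by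
  rw [pairingEquiv_apply, pairingEquiv_apply, mul_sum]
  calc ∑ s with #s = p, (-1) ^ invNum s * coeff (koszulD f p x) s * coeff y sᶜ
      = ∑ s with #s = p, ∑ i ∈ sᶜ, (-1) ^ (invNum s + #{j ∈ s | j < i}) * f i *
          coeff x (insert i s) * coeff y sᶜ := by
        refine sum_congr rfl fun s hs => ?_
        rw [coeff_of_card_eq _ (mem_filter_univ s |>.mp hs), koszulD_apply, mul_sum, sum_mul]
        exact sum_congr rfl fun i _ => by ring
    _ = ∑ u with #u = p + 1, ∑ i ∈ u, (-1) ^ (invNum (u.erase i) + #{j ∈ u.erase i | j < i}) *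
          f i * coeff x (insert i (u.erase i)) * coeff y (u.erase i)ᶜ :=
        sum_sum_compl_eq_sum_sum_erase p _
    _ = ∑ u with #u = p + 1,
          (-1) ^ p * ((-1) ^ invNum u * coeff x u * coeff (koszulD f q y) uᶜ) := by
        refine sum_congr rfl fun u hu => ?_
        have hu : #u = p + 1 := (mem_filter_univ u).mp hu
        rw [coeff_of_card_eq _ (card_compl_eq h hu), koszulD_apply, mul_sum, mul_sum]
        refine sum_congr (compl_compl u).symm fun i hi => ?_
        have hi : i ∈ u := by simpa using hi
        rw [← neg_one_pow_invNum_insert (notMem_erase i u), insert_erase hi, card_erase_of_mem hi,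
          hu, compl_erase, Nat.add_sub_cancel, pow_add, pow_add]
        ring

theorem pairingEquiv_comp_koszulD (f : Fin n → P) {p q : ℕ} (h : p + 1 + q = n) :
    (pairingEquiv P p (q + 1) (by omega : p + (q + 1) = n) : KMod P n p →ₗ[P] _) ∘ₗ
        koszulD f p =
      (((-1 : Pˣ) ^ p : Pˣ) : P) •
        (koszulDT f q ∘ₗ (pairingEquiv P (p + 1) q h : KMod P n (p + 1) →ₗ[P] _)) := by
  refine LinearMap.ext fun x => LinearMap.ext fun y => ?_
  simp [pairingEquiv_koszulD f h, koszulDT]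

instance : IsEmpty {s : Finset (Fin n) // #s = n + 1} :=
  ⟨fun s => by simpa [s.2] using card_le_univ s.1⟩

theorem koszulD_self_eq_zero (f : Fin n → P) : koszulD f n = 0 :=
  LinearMap.ext fun x => by simp [Subsingleton.elim x 0]

theorem koszulDT_self_eq_zero (f : Fin n → P) : koszulDT f n = 0 :=
  LinearMap.ext fun ψ => LinearMap.ext fun x => by simp [Subsingleton.elim x 0]

theorem map_koszulZ_pairingEquiv (f : Fin n → P) {p q : ℕ} (h : p + q = n) :
    (koszulZ f p).map (pairingEquiv P p q h : KMod P n p →ₗ[P] _) =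
      LinearMap.ker (koszulDT f q) := by
  cases p with
  | zero =>
    obtain rfl : q = n := by omega
    rw [koszulZ, Submodule.map_top, LinearEquiv.range, koszulDT_self_eq_zero, LinearMap.ker_zero]
  | succ p =>
    exact LinearMap.map_ker_eq_of_comp_eq_smul (pairingEquiv_comp_koszulD f (by omega))

theorem map_range_koszulD_pairingEquiv (f : Fin n → P) {p q : ℕ} (h : p + q = n) :
    (LinearMap.range (koszulD f p)).map (pairingEquiv P p q h : KMod P n p →ₗ[P] _) =
      koszulCB f q := by
  cases q with
  | zero =>
    obtain rfl : p = n := by omega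
    rw [koszulD_self_eq_zero, LinearMap.range_zero, Submodule.map_bot, koszulCB]
  | succ q =>
    exact LinearMap.map_range_eq_of_comp_eq_smul (pairingEquiv_comp_koszulD f (by omega))

end Koszul

/-- **Self-duality of the Koszul complex.** For a sequence `f = (f₁, …, fₙ)` of elements
of a commutative ring `P` and each `0 ≤ p ≤ n`, the Koszul homology `Hₚ(K•(f))` is
isomorphic to the Koszul cohomology `H^{n-p}(Hom_P(K•(f), P))`. -/
theorem koszul_homology_iso_cohomology (P : Type) [CommRing P] (n : ℕ) (f : Fin n → P)
    (p : ℕ) (hp : p ≤ n) :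
    Nonempty (KoszulHomology f p ≃ₗ[P] KoszulCohomology f (n - p)) :=
  ⟨Submodule.subquotientEquiv (Koszul.pairingEquiv P p (n - p) (by omega))
    (Koszul.map_koszulZ_pairingEquiv f _) (Koszul.map_range_koszulD_pairingEquiv f _)⟩
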